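/- Let k be a field, let α be a translation function, and let G : V → V' be a morphism of persistence modules over k. Then G is an α-interleaving if and only if both ker G and coker G are α-trivial; concretely: G is an α-interleaving if and only if (i) for every t ∈ [0,∞] and every v ∈ V(t) with G(t)(v) = 0, the structure map V(t ≤ α(t)) sends v to 0, and (ii) for every t ∈ [0,∞] and every v' ∈ V'(t), the element V'(t ≤ α(t))(v') lies in the image of G(α(t)). -/

import Mathlib

open CategoryTheory
open scoped ENNReal

/-- A morphism `G : V ⟶ V'` of persistence modules over `k` (functors from
`[0,∞]`, with its usual order, to vector spaces over `k`) is an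
`α`-interleaving if for every `t` there is a linear map
`F_t : V'(t) ⟶ V(α t)` with `F_t ∘ G(t)` and `G(α t) ∘ F_t` equal to the
respective `α`-units. -/
def IsInterleaving {k : Type} [Field k] (α : ℝ≥0∞ → ℝ≥0∞)
    (hα : ∀ t, t ≤ α t) {V V' : ℝ≥0∞ ⥤ ModuleCat k} (G : V ⟶ V') : Prop :=
  ∀ t : ℝ≥0∞, ∃ F : V'.obj t ⟶ V.obj (α t),
    G.app t ≫ F = V.map (homOfLE (hα t)) ∧
    F ≫ G.app (α t) = V'.map (homOfLE (hα t))

/-!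
At each `t`, an `α`-interleaving map `F_t` is exactly a diagonal filler of the naturality square
of `G` along `t ≤ α t`. Over a field such a filler exists precisely when
`ker G(t) ⊆ ker V(t ≤ α t)` and `im V'(t ≤ α t) ⊆ im G(α t)`: the first condition lets the
unit of `V` factor through `G(t)`, and the second lets the remaining defect be lifted through
`G(α t)`.
-/

namespace LinearMap

variable {K W W' X X' : Type*} [DivisionRing K]
  [AddCommGroup W] [Module K W] [AddCommGroup W'] [Module K W']
  [AddCommGroup X] [Module K X] [AddCommGroup X'] [Module K X']

theorem exists_comp_eq_iff_ker_le (g : W →ₗ[K] W') (u : W →ₗ[K] X) :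
    (∃ F : W' →ₗ[K] X, F ∘ₗ g = u) ↔ ker g ≤ ker u := by
  refine ⟨fun ⟨F, hF⟩ => hF ▸ ker_le_ker_comp g F, fun hle => ?_⟩
  obtain ⟨L, hL⟩ := ((ker g).liftQ g le_rfl).exists_leftInverse_of_injective
    ((ker g).ker_liftQ_eq_bot g le_rfl le_rfl)
  refine ⟨(ker g).liftQ u hle ∘ₗ L, ext fun w => ?_⟩
  simpa using congr((ker g).liftQ u hle ($hL (Submodule.Quotient.mk w)))

theorem exists_comp_eq_iff_range_le (f : X →ₗ[K] X') (h : W' →ₗ[K] X') :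
    (∃ H : W' →ₗ[K] X, f ∘ₗ H = h) ↔ range h ≤ range f := by
  refine ⟨fun ⟨H, hH⟩ => hH ▸ range_comp_le_range H f, fun hle => ?_⟩
  obtain ⟨H, hH⟩ := Module.projective_lifting_property f.rangeRestrict
    (h.codRestrict _ fun w => hle (mem_range_self h w)) f.surjective_rangeRestrict
  exact ⟨H, ext fun w => congr(($hH w : X'))⟩

theorem exists_diagonal_iff_ker_le_and_range_le {g : W →ₗ[K] W'} {u : W →ₗ[K] X}
    {f : X →ₗ[K] X'} {u' : W' →ₗ[K] X'} (hsq : f ∘ₗ u = u' ∘ₗ g) :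
    (∃ F : W' →ₗ[K] X, F ∘ₗ g = u ∧ f ∘ₗ F = u') ↔ ker g ≤ ker u ∧ range u' ≤ range f := by
  refine ⟨fun ⟨F, hFg, hfF⟩ => ⟨hFg ▸ ker_le_ker_comp g F, hfF ▸ range_comp_le_range F f⟩,
    fun ⟨hker, hrange⟩ => ?_⟩
  obtain ⟨F₀, hF₀⟩ := (exists_comp_eq_iff_ker_le g u).2 hker
  -- The defect of `F₀` on the lower triangle vanishes on `range g`, so it can be corrected
  -- by a map through `W' ⧸ range g` without disturbing the upper triangle.
  set D := u' - f ∘ₗ F₀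
  have hDg : range g ≤ ker D := by
    rintro _ ⟨w, rfl⟩
    have hw : f (u w) = u' (g w) := congr($hsq w)
    simp [D, ← hw, ← hF₀]
  have hD : range ((range g).liftQ D hDg) ≤ range f := by
    rw [Submodule.range_liftQ]
    rintro _ ⟨w', rfl⟩
    obtain ⟨x, hx⟩ := hrange (mem_range_self u' w')
    exact ⟨x - F₀ w', by simp [D, hx]⟩
  obtain ⟨H, hH⟩ := (exists_comp_eq_iff_range_le f _).2 hD
  refine ⟨F₀ + H ∘ₗ (range g).mkQ, ?_, ?_⟩
  · ext w
    simp [← hF₀, (Submodule.Quotient.mk_eq_zero _).2 (mem_range_self g w)]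
  · rw [comp_add, ← comp_assoc, hH, Submodule.liftQ_mkQ]
    simp [D]

end LinearMap

theorem isInterleaving_iff_ker_coker_general {k : Type} [Field k]
    (α : ℝ≥0∞ → ℝ≥0∞) (hα : ∀ t, t ≤ α t)
    {V V' : ℝ≥0∞ ⥤ ModuleCat k} (G : V ⟶ V') :
    IsInterleaving α hα G ↔
      ((∀ (t : ℝ≥0∞) (v : V.obj t), G.app t v = 0 →
          V.map (homOfLE (hα t)) v = 0) ∧
        (∀ (t : ℝ≥0∞) (v' : V'.obj t), ∃ v : V.obj (α t),
          G.app (α t) v = V'.map (homOfLE (hα t)) v')) := by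
  rw [← forall_and]
  refine forall_congr' fun t => ?_
  have hsq := congr(ModuleCat.Hom.hom $(G.naturality (homOfLE (hα t))))
  simp only [ModuleCat.hom_comp] at hsq
  have hdiag := LinearMap.exists_diagonal_iff_ker_le_and_range_le hsq
  rw [ModuleCat.hom_surjective.exists] at hdiag
  simp only [SetLike.le_def, LinearMap.mem_ker, LinearMap.mem_range, forall_exists_index,
    forall_apply_eq_imp_iff] at hdiag
  simp only [ModuleCat.hom_ext_iff, ModuleCat.hom_comp]
  exact hdiag

/-- `G` is an `α`-interleaving if and only if `ker G` and
`coker G` are `α`-trivial, i.e. (i) every element of a pointwise kernel is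
killed by the `α`-unit, and (ii) the `α`-unit of every element of `V'(t)`
lies in the image of `G(α t)`. -/
theorem isInterleaving_iff_ker_coker {k : Type} [Field k]
    (α : ℝ≥0∞ → ℝ≥0∞) (hmono : Monotone α) (hα : ∀ t, t ≤ α t)
    {V V' : ℝ≥0∞ ⥤ ModuleCat k} (G : V ⟶ V') :
    IsInterleaving α hα G ↔
      ((∀ (t : ℝ≥0∞) (v : V.obj t), G.app t v = 0 →
          V.map (homOfLE (hα t)) v = 0) ∧
        (∀ (t : ℝ≥0∞) (v' : V'.obj t), ∃ v : V.obj (α t),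
          G.app (α t) v = V'.map (homOfLE (hα t)) v')) :=
  isInterleaving_iff_ker_coker_general α hα G
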